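/- For every k ≥ 1, the counterexample graph G_k has exactly 8 perfect matchings. -/

import Mathlib

/-!
Each chain of boxes has a cycle vertex (`x₁`, `y₁`, `x₂` or `y₂`) adjacent only to the two ends
of the chain, so in a perfect matching one end of every chain is matched outside it; walking along
the chain from that end forces its interior matching and leaves the other end unmatched inside the
chain as well. What remains of a gadget `H_k` is its 12-cycle with the chord `ab`, and a
propagation around it leaves three possibilities: one of the two perfect matchings of the cycle,
or the matching through `ab` that leaves `u` and `v` to be matched outside. In `G_k`, the vertex
`t_{j+1}` is matched to `v_j` or to `u_{j+1}`, so the gadgets alternate between open and closed: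
two choices of which gadgets are open, times two matchings in each of the two closed gadgets,
give `8`.
-/

/-- The number of perfect matchings of a graph, counted as the number of
subgraphs that are perfect matchings. -/
noncomputable def pmCount {V : Type*} (G : SimpleGraph V) : ℕ :=
  Nat.card {M : G.Subgraph // M.IsPerfectMatching}

/-- The number of near-perfect matchings of `G` with holes exactly at `u` and `v`,
i.e. matchings covering every vertex except `u` and `v`. -/
noncomputable def npCount {V : Type*} (G : SimpleGraph V) (u v : V) : ℕ :=
  Nat.card {M : G.Subgraph // M.IsMatching ∧ M.verts = Set.univ \ {u, v}}

/-- The edge set of the chain-of-boxes gadget `B_k`, realized on the natural numbers: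
the path vertices `v_0, …, v_{2k-1}` are `0, …, 2k-1`, and for `i < k` the extra
vertices are `a_i = 2k + 2i` and `b_i = 2k + 2i + 1`. -/
def boxEdges (k : ℕ) : Set (Sym2 ℕ) :=
  {e | ∃ j, j + 2 ≤ 2 * k ∧ e = s(j, j + 1)} ∪
  {e | ∃ i, i < k ∧ e = s(2 * i, 2 * k + 2 * i)} ∪
  {e | ∃ i, i < k ∧ e = s(2 * k + 2 * i, 2 * k + 2 * i + 1)} ∪
  {e | ∃ i, i < k ∧ e = s(2 * k + 2 * i + 1, 2 * i + 1)}

/-- Relabelling of the vertices of a chain-of-boxes copy: the path endpoint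
`v_0` (index `0`) is sent to `e0`, the path endpoint `v_{2k-1}` (index `2k-1`)
is sent to `e1`, and every other vertex `n` is sent to `base + n`. -/
def relabelBox (k e0 e1 base : ℕ) (n : ℕ) : ℕ :=
  if n = 0 then e0 else if n = 2 * k - 1 then e1 else base + n

/-- Edge set of the torpid-mixing gadget `H_k`, realized on ℕ.  The 12-cycle is
`a = 0, x₁ = 1, w₁ = 2, u = 3, w₂ = 4, x₂ = 5, b = 6, y₂ = 7, z₂ = 8, v = 9,
z₁ = 10, y₁ = 11` (in cyclic order), together with the chord `{a, b}` and four
disjoint copies of the chain-of-boxes gadget `B_k` whose path endpoints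
`(v_0, v_{2k-1})` are identified with `(w₁, a)`, `(a, z₁)`, `(w₂, b)`, `(b, z₂)`
respectively; the internal vertices of the `j`-th copy are relabelled into the
range starting at `12 + 4kj`. -/
def gadgetEdges (k : ℕ) : Set (Sym2 ℕ) :=
  {e | ∃ i, i < 12 ∧ e = s(i, (i + 1) % 12)} ∪ {s(0, 6)} ∪
  Sym2.map (relabelBox k 2 0 12) '' boxEdges k ∪
  Sym2.map (relabelBox k 0 10 (12 + 4 * k)) '' boxEdges k ∪
  Sym2.map (relabelBox k 4 6 (12 + 8 * k)) '' boxEdges k ∪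
  Sym2.map (relabelBox k 6 8 (12 + 12 * k)) '' boxEdges k

/-- Vertex set of the torpid-mixing gadget `H_k`: the 12 cycle vertices together
with the internal (non-endpoint) vertices of the four chain-of-boxes copies. -/
def gadgetVerts (k : ℕ) : Set ℕ :=
  {n | n < 12} ∪
  {m | ∃ j, j < 4 ∧ ∃ n, 0 < n ∧ n < 4 * k ∧ n ≠ 2 * k - 1 ∧ m = 12 + 4 * k * j + n}

/-- The torpid-mixing gadget `H_k`. -/
def gadgetGraph (k : ℕ) : SimpleGraph (gadgetVerts k) :=
  (SimpleGraph.fromEdgeSet (gadgetEdges k)).induce (gadgetVerts k)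

/-- Relabelling of the vertices of a copy of the torpid-mixing gadget: the vertex
`u` (index `3`) is sent to `u'`, the vertex `v` (index `9`) is sent to `v'`, and
every other vertex `n` is sent to `base + n`. -/
def relabelGadget (u' v' base : ℕ) (n : ℕ) : ℕ :=
  if n = 3 then u' else if n = 9 then v' else base + n

/-- Edge set of the counterexample graph `G_k`, realized on ℕ.  The 12-cycle is
`t₁ = 0, u₁ = 1, v₁ = 2, t₂ = 3, u₂ = 4, v₂ = 5, t₃ = 6, u₃ = 7, v₃ = 8,
t₄ = 9, u₄ = 10, v₄ = 11` (in cyclic order); each edge `{u_i, v_i}` (those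
`{i, i+1}` with `i % 3 = 1`) is deleted and replaced by a disjoint copy of the
torpid-mixing gadget `H_k` whose vertices `u` and `v` are identified with `u_i`
and `v_i`; the remaining vertices of the `j`-th copy (`j = i - 1 ∈ {0,1,2,3}`)
are relabelled into the range starting at `12 + (16k + 12)j`. -/
def counterEdges (k : ℕ) : Set (Sym2 ℕ) :=
  {e | ∃ i, i < 12 ∧ i % 3 ≠ 1 ∧ e = s(i, (i + 1) % 12)} ∪
  {e | ∃ j, j < 4 ∧
    e ∈ Sym2.map (relabelGadget (3 * j + 1) (3 * j + 2) (12 + (16 * k + 12) * j)) ''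
      gadgetEdges k}

/-- Vertex set of the counterexample graph `G_k`: the 12 cycle vertices together
with the vertices of the four gadget copies other than their `u` and `v`. -/
def counterVerts (k : ℕ) : Set ℕ :=
  {n | n < 12} ∪
  {m | ∃ j, j < 4 ∧ ∃ n ∈ gadgetVerts k, n ≠ 3 ∧ n ≠ 9 ∧
    m = 12 + (16 * k + 12) * j + n}

/-- The counterexample graph `G_k`. -/
def counterGraph (k : ℕ) : SimpleGraph (counterVerts k) :=
  (SimpleGraph.fromEdgeSet (counterEdges k)).induce (counterVerts k)

open SimpleGraph

namespace SimpleGraph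

variable {V W ι : Type*}

def IsMatching (M : SimpleGraph V) : Prop :=
  ∀ ⦃u v w⦄, M.Adj u v → M.Adj u w → v = w

namespace IsMatching

variable {M N : SimpleGraph V}

lemma comap (hM : M.IsMatching) {f : W → V} (hf : Function.Injective f) :
    (M.comap f).IsMatching :=
  fun _ _ _ hv hw => hf (hM hv hw)

lemma map (hM : M.IsMatching) (f : V ↪ W) : (M.map f).IsMatching := by
  intro _ _ _ hv hw
  obtain ⟨u, v, huv, rfl, rfl⟩ := (map_adj _ _ _ _).1 hv
  obtain ⟨u', w, huw, hu, rfl⟩ := (map_adj _ _ _ _).1 hw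
  rw [f.injective hu] at huw
  rw [hM huv huw]

lemma inf_left (hM : M.IsMatching) : (M ⊓ N).IsMatching :=
  fun _ _ _ hv hw => hM hv.1 hw.1

lemma sup (hM : M.IsMatching) (hN : N.IsMatching) (hd : Disjoint M.support N.support) :
    (M ⊔ N).IsMatching := by
  rintro u v w (hv | hv) (hw | hw)
  · exact hM hv hw
  · exact (Set.disjoint_left.1 hd hv.mem_support_left hw.mem_support_left).elim
  · exact (Set.disjoint_left.1 hd hw.mem_support_left hv.mem_support_left).elim
  · exact hN hv hw

lemma iSup {M : ι → SimpleGraph V} (hM : ∀ i, (M i).IsMatching)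
    (hd : Pairwise fun i j => Disjoint (M i).support (M j).support) :
    (⨆ i, M i).IsMatching := by
  intro u v w hv hw
  obtain ⟨i, hv⟩ := iSup_adj.1 hv
  obtain ⟨j, hw⟩ := iSup_adj.1 hw
  obtain rfl | hij := eq_or_ne i j
  · exact hM i hv hw
  · exact (Set.disjoint_left.1 (hd hij) hv.mem_support_left hw.mem_support_left).elim

lemma eq_of_le (hN : N.IsMatching) (hle : M ≤ N)
    (hsupp : ∀ ⦃u v⦄, N.Adj u v → u ∈ M.support ∨ v ∈ M.support) : N = M := by
  refine le_antisymm (fun u v huv => ?_) hle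
  rcases hsupp huv with ⟨w, huw⟩ | ⟨w, hvw⟩
  · rwa [hN huv (hle huw)]
  · exact (hN huv.symm (hle hvw) ▸ hvw).symm

end IsMatching

def perfectMatchingInduceEquiv (G : SimpleGraph V) (S : Set V) :
    {M : (G.induce S).Subgraph // M.IsPerfectMatching} ≃
      {N : SimpleGraph V // N.IsMatching ∧ N ≤ G ∧ N.support = S} where
  toFun M := ⟨M.1.spanningCoe.map (Function.Embedding.subtype _),
    IsMatching.map (fun _ _ _ hv hw => M.2.1.eq_of_adj_left hv hw) _,
    fun u v h => by
      obtain ⟨a, b, hab, rfl, rfl⟩ := (map_adj _ _ _ _).1 h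
      exact M.1.adj_sub hab,
    by
      rw [support_map]
      ext u
      refine ⟨fun ⟨a, _, ha⟩ => ha ▸ a.2, fun hu => ?_⟩
      obtain ⟨w, hw, -⟩ := M.2.1 (M.2.2 ⟨u, hu⟩)
      exact ⟨⟨u, hu⟩, ⟨w, hw⟩, rfl⟩⟩
  invFun N := ⟨toSubgraph (G := G.induce S) (N.1.comap Subtype.val) fun _ _ h => N.2.2.1 h,
    Subgraph.isPerfectMatching_iff.2 fun v => by
      obtain ⟨w, hw⟩ : (v : V) ∈ N.1.support := N.2.2.2.symm ▸ v.2
      exact ⟨⟨w, N.2.2.2 ▸ hw.symm.mem_support_left⟩, hw,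
        fun w' hw' => Subtype.ext (N.2.1 hw' hw)⟩⟩
  left_inv M := by
    refine Subtype.ext (Subgraph.ext (Set.eq_univ_of_forall M.2.2).symm ?_)
    ext a b
    refine ⟨fun h => ?_,
      fun h => (map_adj (Function.Embedding.subtype _) _ _ _).2 ⟨a, b, h, rfl, rfl⟩⟩
    obtain ⟨a', b', h', ha, hb⟩ := (map_adj (Function.Embedding.subtype _) _ _ _).1 h
    rwa [← Subtype.ext ha, ← Subtype.ext hb]
  right_inv N := by
    refine Subtype.ext (SimpleGraph.ext ?_)
    ext u v
    refine ⟨fun h => ?_, fun h => ?_⟩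
    · obtain ⟨a, b, hab, rfl, rfl⟩ := (map_adj _ _ _ _).1 h
      exact hab
    · have hu : u ∈ S := N.2.2.2 ▸ h.mem_support_left
      have hv : v ∈ S := N.2.2.2 ▸ h.symm.mem_support_left
      exact (map_adj _ _ _ _).2 ⟨⟨u, hu⟩, ⟨v, hv⟩, h, rfl, rfl⟩

end SimpleGraph

lemma Sym2.mk_mem_image_map_iff {α β : Type*} {f : α → β} {S : Set (Sym2 α)} {a b : β} :
    s(a, b) ∈ Sym2.map f '' S ↔ ∃ x y, s(x, y) ∈ S ∧ f x = a ∧ f y = b := by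
  constructor
  · rintro ⟨e, he, h⟩
    induction e with
    | h x y =>
      rw [Sym2.map_mk, Sym2.eq_iff] at h
      rcases h with ⟨rfl, rfl⟩ | ⟨rfl, rfl⟩
      exacts [⟨x, y, he, rfl, rfl⟩, ⟨y, x, Sym2.eq_swap ▸ he, rfl, rfl⟩]
  · rintro ⟨x, y, h, rfl, rfl⟩
    exact ⟨_, h, Sym2.map_mk f x y⟩

lemma Nat.eq_of_mul_add_eq_mul_add {q a a' r r' : ℕ} (hr : r < q) (hr' : r' < q)
    (h : q * a + r = q * a' + r') : a = a' ∧ r = r' := by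
  have hq : 0 < q := by omega
  constructor
  · simpa [Nat.mul_add_div hq, Nat.div_eq_of_lt hr, Nat.div_eq_of_lt hr'] using congrArg (· / q) h
  · simpa [Nat.mul_add_mod, Nat.mod_eq_of_lt hr, Nat.mod_eq_of_lt hr'] using congrArg (· % q) h

/-! ### Chains of boxes -/

section ChainOfBoxes

variable {k : ℕ}

/-- The edges of `B_k` with a chosen orientation: `v_j v_{j+1}`, `v_{2i} a_i`, `a_i b_i` and
`b_i v_{2i+1}`. -/
def BoxArc (k a b : ℕ) : Prop :=
  (a + 2 ≤ 2 * k ∧ b = a + 1) ∨ (a % 2 = 0 ∧ a < 2 * k ∧ b = 2 * k + a) ∨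
    (2 * k ≤ a ∧ a < 4 * k ∧ a % 2 = 0 ∧ b = a + 1) ∨
    (2 * k ≤ a ∧ a < 4 * k ∧ a % 2 = 1 ∧ b + 2 * k = a)

def BoxAdj (k a b : ℕ) : Prop := BoxArc k a b ∨ BoxArc k b a

lemma mem_boxEdges {a b : ℕ} : s(a, b) ∈ boxEdges k ↔ BoxAdj k a b := by
  simp only [boxEdges, Set.mem_union, Set.mem_ofPred_eq, Sym2.eq_iff, BoxAdj, BoxArc]
  constructor
  · rintro (((⟨j, hj, h⟩ | ⟨i, hi, h⟩) | ⟨i, hi, h⟩) | ⟨i, hi, h⟩) <;>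
      rcases h with ⟨rfl, rfl⟩ | ⟨rfl, rfl⟩ <;>
      first | exact .inl (by omega) | exact .inr (by omega)
  · rintro ((h | h | h | h) | (h | h | h | h))
    · exact .inl (.inl (.inl ⟨a, by omega⟩))
    · exact .inl (.inl (.inr ⟨a / 2, by omega⟩))
    · exact .inl (.inr ⟨(a - 2 * k) / 2, by omega⟩)
    · exact .inr ⟨(a - 2 * k) / 2, by omega⟩
    · exact .inl (.inl (.inl ⟨b, by omega⟩))
    · exact .inl (.inl (.inr ⟨b / 2, by omega⟩))
    · exact .inl (.inr ⟨(b - 2 * k) / 2, by omega⟩)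
    · exact .inr ⟨(b - 2 * k) / 2, by omega⟩

lemma BoxAdj.lt {n m : ℕ} (h : BoxAdj k n m) : n < 4 * k ∧ m < 4 * k := by
  unfold BoxAdj BoxArc at h; omega

def BoxInterior (k n : ℕ) : Prop := 0 < n ∧ n < 4 * k ∧ n ≠ 2 * k - 1

/-- Pairs `v_{2i+1}` with `v_{2i+2}` and `a_i` with `b_i`. -/
def boxMate (k n : ℕ) : ℕ :=
  if n < 2 * k then (if n % 2 = 1 then n + 1 else n - 1)
  else (if n % 2 = 0 then n + 1 else n - 1)

lemma boxInterior_boxMate {n : ℕ} (hn : BoxInterior k n) : BoxInterior k (boxMate k n) := by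
  unfold BoxInterior boxMate at *; split_ifs <;> omega

lemma boxMate_boxMate {n : ℕ} (hn : BoxInterior k n) : boxMate k (boxMate k n) = n := by
  unfold BoxInterior boxMate at *; split_ifs <;> omega

lemma boxMate_ne {n : ℕ} (hn : BoxInterior k n) : boxMate k n ≠ n := by
  unfold BoxInterior boxMate at *; split_ifs <;> omega

lemma boxAdj_boxMate {n : ℕ} (hn : BoxInterior k n) : BoxAdj k n (boxMate k n) := by
  unfold BoxInterior boxMate BoxAdj BoxArc at *; split_ifs <;> omega

def boxMatching (k : ℕ) : SimpleGraph ℕ where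
  Adj n m := BoxInterior k n ∧ m = boxMate k n
  symm := ⟨by
    rintro n _ ⟨hn, rfl⟩
    exact ⟨boxInterior_boxMate hn, (boxMate_boxMate hn).symm⟩⟩
  loopless := ⟨fun _ h => boxMate_ne h.1 h.2.symm⟩

lemma boxMatching_isMatching : (boxMatching k).IsMatching := by
  rintro n _ _ ⟨-, rfl⟩ ⟨-, rfl⟩; rfl

lemma boxMatching_le_iff {B : SimpleGraph ℕ} :
    boxMatching k ≤ B ↔ ∀ ⦃n⦄, BoxInterior k n → B.Adj n (boxMate k n) := by
  refine ⟨fun h n hn => h ⟨hn, rfl⟩, ?_⟩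
  rintro h n _ ⟨hn, rfl⟩
  exact h hn

variable {B : SimpleGraph ℕ}

/-- Walking along the chain from an unmatched `v₀`: each `v_{2i}` is matched backwards, which
forces `a_i b_i` and `v_{2i+1} v_{2i+2}`. -/
lemma adj_box_of_zero_not_mem_support (hB : B.IsMatching)
    (hnbr : ∀ ⦃n m⦄, BoxInterior k n → B.Adj n m → BoxAdj k n m)
    (hcov : ∀ ⦃n⦄, BoxInterior k n → n ∈ B.support) (h0 : 0 ∉ B.support) {i : ℕ}
    (hi : i < k) :
    B.Adj (2 * k + 2 * i) (2 * k + 2 * i + 1) ∧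
      (i + 1 < k → B.Adj (2 * i + 1) (2 * i + 2)) := by
  have partner : ∀ n, BoxInterior k n → ∃ m, BoxAdj k n m ∧ B.Adj n m := fun n hn =>
    let ⟨m, hm⟩ := hcov hn; ⟨m, hnbr hn hm, hm⟩
  have step : ∀ i < k, ¬ B.Adj (2 * i) (2 * k + 2 * i) → ¬ B.Adj (2 * i) (2 * i + 1) →
      B.Adj (2 * k + 2 * i) (2 * k + 2 * i + 1) ∧
        (i + 1 < k → B.Adj (2 * i + 1) (2 * i + 2)) := by
    intro i hi ha hv
    have htop : B.Adj (2 * k + 2 * i) (2 * k + 2 * i + 1) := by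
      obtain ⟨m, hnm, hm⟩ := partner (2 * k + 2 * i) (by unfold BoxInterior; omega)
      unfold BoxAdj BoxArc at hnm
      obtain rfl | rfl : m = 2 * i ∨ m = 2 * k + 2 * i + 1 := by omega
      exacts [(ha hm.symm).elim, hm]
    refine ⟨htop, fun hi' => ?_⟩
    obtain ⟨m, hnm, hm⟩ := partner (2 * i + 1) (by unfold BoxInterior; omega)
    unfold BoxAdj BoxArc at hnm
    obtain rfl | rfl | rfl : m = 2 * i ∨ m = 2 * i + 2 ∨ m = 2 * k + 2 * i + 1 := by omega
    · exact (hv hm.symm).elim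
    · exact hm
    · have := hB htop.symm hm.symm; omega
  induction i with
  | zero => exact step 0 hi (fun h => h0 ⟨_, h⟩) (fun h => h0 ⟨_, h⟩)
  | succ i ih =>
    have hprev := ((ih (by omega)).2 hi).symm
    refine step (i + 1) hi (fun h => ?_) (fun h => ?_) <;>
    · rw [show 2 * (i + 1) = 2 * i + 2 by ring] at h
      have := hB hprev h
      omega

lemma boxMatching_le_of_zero_not_mem_support (hB : B.IsMatching)
    (hnbr : ∀ ⦃n m⦄, BoxInterior k n → B.Adj n m → BoxAdj k n m)
    (hcov : ∀ ⦃n⦄, BoxInterior k n → n ∈ B.support) (h0 : 0 ∉ B.support) :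
    boxMatching k ≤ B := by
  have forced := @adj_box_of_zero_not_mem_support k B hB hnbr hcov h0
  refine boxMatching_le_iff.2 fun n hn => ?_
  unfold BoxInterior at hn
  unfold boxMate
  split_ifs with h1 h2 h2
  · have := (forced (i := (n - 1) / 2) (by omega)).2 (by omega)
    rwa [show 2 * ((n - 1) / 2) + 1 = n by omega, show 2 * ((n - 1) / 2) + 2 = n + 1 by omega]
      at this
  · have := (forced (i := (n - 2) / 2) (by omega)).2 (by omega)
    rw [show 2 * ((n - 2) / 2) + 1 = n - 1 by omega, show 2 * ((n - 2) / 2) + 2 = n by omega]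
      at this
    exact this.symm
  · have := (forced (i := (n - 2 * k) / 2) (by omega)).1
    rwa [show 2 * k + 2 * ((n - 2 * k) / 2) = n by omega] at this
  · have := (forced (i := (n - 1 - 2 * k) / 2) (by omega)).1
    rw [show 2 * k + 2 * ((n - 1 - 2 * k) / 2) = n - 1 by omega,
      show n - 1 + 1 = n by omega] at this
    exact this.symm

/-- The reflection of `B_k` exchanging `v_0` and `v_{2k-1}`, extended by the identity. -/
def boxMirror (k n : ℕ) : ℕ :=
  if n < 2 * k then 2 * k - 1 - n else if n < 4 * k then 6 * k - 1 - n else n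

lemma boxMirror_boxMirror (n : ℕ) : boxMirror k (boxMirror k n) = n := by
  unfold boxMirror; split_ifs <;> omega

lemma boxMirror_injective : Function.Injective (boxMirror k) :=
  Function.LeftInverse.injective boxMirror_boxMirror

lemma boxMirror_zero : boxMirror k 0 = 2 * k - 1 := by
  unfold boxMirror; split_ifs <;> omega

lemma BoxArc.mirror {a b : ℕ} (h : BoxArc k a b) : BoxArc k (boxMirror k b) (boxMirror k a) := by
  unfold BoxArc at h
  rcases h with h | h | h | h <;> unfold boxMirror <;> split_ifs <;> unfold BoxArc <;> omega

lemma BoxAdj.of_mirror {a b : ℕ} (h : BoxAdj k (boxMirror k a) (boxMirror k b)) :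
    BoxAdj k a b := by
  rw [← boxMirror_boxMirror (k := k) a, ← boxMirror_boxMirror (k := k) b]
  exact h.elim (fun h => .inr h.mirror) (fun h => .inl h.mirror)

lemma boxInterior_boxMirror {n : ℕ} : BoxInterior k (boxMirror k n) ↔ BoxInterior k n := by
  unfold boxMirror BoxInterior; split_ifs <;> omega

lemma boxMirror_boxMate_boxMirror {n : ℕ} (hn : BoxInterior k n) :
    boxMirror k (boxMate k (boxMirror k n)) = boxMate k n := by
  unfold BoxInterior at hn; unfold boxMirror boxMate; split_ifs <;> omega

lemma boxMatching_le (hB : B.IsMatching)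
    (hnbr : ∀ ⦃n m⦄, BoxInterior k n → B.Adj n m → BoxAdj k n m)
    (hcov : ∀ ⦃n⦄, BoxInterior k n → n ∈ B.support)
    (hend : 0 ∉ B.support ∨ 2 * k - 1 ∉ B.support) : boxMatching k ≤ B := by
  rcases hend with h0 | h1
  · exact boxMatching_le_of_zero_not_mem_support hB hnbr hcov h0
  have hmirror := boxMatching_le_of_zero_not_mem_support (B := B.comap (boxMirror k))
    (hB.comap boxMirror_injective)
    (fun n m hn h => .of_mirror (hnbr (boxInterior_boxMirror.2 hn) h))
    (fun n hn => by
      obtain ⟨m, hm⟩ := hcov (boxInterior_boxMirror.2 hn)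
      exact ⟨boxMirror k m, by simpa [boxMirror_boxMirror] using hm⟩)
    (fun h0 => h1 (by
      obtain ⟨m, hm⟩ := (mem_support _).1 h0
      rw [comap_adj, boxMirror_zero] at hm
      exact hm.mem_support_left))
  refine boxMatching_le_iff.2 fun n hn => ?_
  have := hmirror ⟨boxInterior_boxMirror.2 hn, rfl⟩
  rwa [comap_adj, boxMirror_boxMirror, boxMirror_boxMate_boxMirror hn] at this

lemma not_adj_of_boxMatching_le (hB : B.IsMatching) (hle : boxMatching k ≤ B)
    (hend : 0 ∉ B.support ∨ 2 * k - 1 ∉ B.support) {e m : ℕ} (he : e = 0 ∨ e = 2 * k - 1)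
    (hm : m < 4 * k) : ¬ B.Adj e m := by
  intro h
  by_cases hmi : BoxInterior k m
  · have := hB (hle ⟨hmi, rfl⟩) h.symm
    have := boxInterior_boxMate hmi
    unfold BoxInterior at this; omega
  obtain rfl | hne := eq_or_ne m e
  · exact h.ne rfl
  · unfold BoxInterior at hmi
    rcases hend with h0 | h1 <;> rcases he with rfl | rfl
    · exact h0 ⟨m, h⟩
    · exact h0 ⟨_, (show m = 0 by omega) ▸ h.symm⟩
    · exact h1 ⟨_, (show m = 2 * k - 1 by omega) ▸ h.symm⟩
    · exact h1 ⟨m, h⟩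

end ChainOfBoxes

/-! ### The gadget `H_k` -/

section Gadget

variable {k : ℕ}

def CycleAdj (x y : ℕ) : Prop :=
  x < 12 ∧ y < 12 ∧
    (y = (x + 1) % 12 ∨ x = (y + 1) % 12 ∨ x = 0 ∧ y = 6 ∨ x = 6 ∧ y = 0)

instance : DecidableRel CycleAdj := fun _ _ => by unfold CycleAdj; infer_instance

lemma relabelBox_injective {e0 e1 base : ℕ} (he : e0 ≠ e1) (h0 : e0 < base) (h1 : e1 < base) :
    Function.Injective (relabelBox k e0 e1 base) := by
  intro a b h; unfold relabelBox at h; split_ifs at h <;> omega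

def chainStart : Fin 4 → ℕ := ![2, 0, 4, 6]

def chainEnd : Fin 4 → ℕ := ![0, 10, 6, 8]

/-- The cycle vertices `x₁`, `y₁`, `x₂`, `y₂`: the only neighbours of each are the two ends of the
corresponding chain. -/
def chainPrivate : Fin 4 → ℕ := ![1, 11, 5, 7]

lemma chainStart_lt (c : Fin 4) : chainStart c < 12 := by fin_cases c <;> decide

lemma chainEnd_lt (c : Fin 4) : chainEnd c < 12 := by fin_cases c <;> decide

lemma chainPrivate_lt (c : Fin 4) : chainPrivate c < 12 := by fin_cases c <;> decide

lemma chainStart_mod_two (c : Fin 4) : chainStart c % 2 = 0 := by fin_cases c <;> decide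

lemma chainEnd_mod_two (c : Fin 4) : chainEnd c % 2 = 0 := by fin_cases c <;> decide

lemma chainPrivate_mod_two (c : Fin 4) : chainPrivate c % 2 = 1 := by fin_cases c <;> decide

def chainEmb (k : ℕ) (c : Fin 4) : ℕ ↪ ℕ :=
  ⟨relabelBox k (chainStart c) (chainEnd c) (12 + 4 * k * c),
    relabelBox_injective (by fin_cases c <;> decide) (by have := chainStart_lt c; omega)
      (by have := chainEnd_lt c; omega)⟩

lemma chainEmb_apply (c : Fin 4) (n : ℕ) :
    chainEmb k c n = relabelBox k (chainStart c) (chainEnd c) (12 + 4 * k * c) n := rfl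

lemma chainEmb_of_ne {c : Fin 4} {n : ℕ} (h0 : n ≠ 0) (h1 : n ≠ 2 * k - 1) :
    chainEmb k c n = 12 + 4 * k * c + n := by
  simp [chainEmb_apply, relabelBox, h0, h1]

lemma chainEmb_zero (c : Fin 4) : chainEmb k c 0 = chainStart c := by
  simp [chainEmb_apply, relabelBox]

lemma chainEmb_last (hk : 1 ≤ k) (c : Fin 4) : chainEmb k c (2 * k - 1) = chainEnd c := by
  simp [chainEmb_apply, relabelBox]; omega

lemma chainEmb_interior {c : Fin 4} {n : ℕ} (hn : BoxInterior k n) :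
    chainEmb k c n = 12 + 4 * k * c + n :=
  chainEmb_of_ne (by unfold BoxInterior at hn; omega) hn.2.2

lemma twelve_le_chainEmb {c : Fin 4} {n : ℕ} (hn : BoxInterior k n) : 12 ≤ chainEmb k c n := by
  rw [chainEmb_interior hn]; omega

lemma chainEmb_of_endpoint {c : Fin 4} {e : ℕ} (he : e = 0 ∨ e = 2 * k - 1) :
    chainEmb k c e = chainStart c ∨ chainEmb k c e = chainEnd c := by
  simp only [chainEmb_apply, relabelBox]; split_ifs <;> simp_all

lemma chainEmb_endpoint_lt {c : Fin 4} {e : ℕ} (he : e = 0 ∨ e = 2 * k - 1) :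
    chainEmb k c e < 12 ∧ chainEmb k c e % 2 = 0 := by
  rcases chainEmb_of_endpoint (c := c) he with h | h <;> rw [h]
  exacts [⟨chainStart_lt c, chainStart_mod_two c⟩, ⟨chainEnd_lt c, chainEnd_mod_two c⟩]

lemma endpoint_of_chainEmb_lt {c : Fin 4} {n : ℕ} (h : chainEmb k c n < 12) :
    n = 0 ∨ n = 2 * k - 1 := by
  by_contra! hn
  rw [chainEmb_of_ne hn.1 hn.2] at h
  omega

lemma chainEmb_eq_chainEmb {c c' : Fin 4} {n n' : ℕ} (hn : BoxInterior k n) (hn' : n' < 4 * k)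
    (h : chainEmb k c' n' = chainEmb k c n) : c' = c ∧ n' = n := by
  rw [chainEmb_interior hn] at h
  by_cases h' : n' = 0 ∨ n' = 2 * k - 1
  · have := chainEmb_endpoint_lt (c := c') h'; omega
  push Not at h'
  rw [chainEmb_of_ne h'.1 h'.2] at h
  obtain ⟨hc, rfl⟩ :=
    Nat.eq_of_mul_add_eq_mul_add (q := 4 * k) (a := c') (a' := c) hn' hn.2.1 (by omega)
  exact ⟨Fin.ext hc, rfl⟩

lemma chainEmb_ne_chainPrivate (c c' : Fin 4) (m : ℕ) : chainEmb k c m ≠ chainPrivate c' := by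
  have h1 := chainPrivate_lt c'
  have h2 := chainPrivate_mod_two c'
  by_cases hm : m = 0 ∨ m = 2 * k - 1
  · have := chainEmb_endpoint_lt (c := c) hm; omega
  · push Not at hm
    rw [chainEmb_of_ne hm.1 hm.2]; omega

lemma mem_gadgetEdges {a b : ℕ} : s(a, b) ∈ gadgetEdges k ↔
    CycleAdj a b ∨ ∃ c n m, BoxAdj k n m ∧ chainEmb k c n = a ∧ chainEmb k c m = b := by
  have base : ∀ c : Fin 4, 12 + 4 * k * c = ![12, 12 + 4 * k, 12 + 8 * k, 12 + 12 * k] c := by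
    intro c; fin_cases c <;> simp <;> ring
  simp only [gadgetEdges, Set.mem_union, Set.mem_ofPred_eq, Set.mem_singleton_iff,
    Sym2.mk_mem_image_map_iff, mem_boxEdges, Sym2.eq_iff, chainEmb_apply, base]
  constructor
  · rintro (((((⟨i, hi, h⟩ | h) | h) | h) | h) | h)
    · left; unfold CycleAdj; omega
    · left; unfold CycleAdj; omega
    · exact .inr ⟨0, h⟩
    · exact .inr ⟨1, h⟩
    · exact .inr ⟨2, h⟩
    · exact .inr ⟨3, h⟩
  · rintro (h | ⟨c, h⟩)
    · unfold CycleAdj at h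
      obtain ⟨ha, hb, h | h | h | h⟩ := h
      · exact .inl (.inl (.inl (.inl (.inl ⟨a, by omega, .inl ⟨rfl, h⟩⟩))))
      · exact .inl (.inl (.inl (.inl (.inl ⟨b, by omega, .inr ⟨h, rfl⟩⟩))))
      · exact .inl (.inl (.inl (.inl (.inr (.inl h)))))
      · exact .inl (.inl (.inl (.inl (.inr (.inr h)))))
    · fin_cases c <;> simp only [Fin.zero_eta, Fin.mk_one, Fin.reduceFinMk, chainStart, chainEnd,
        Matrix.cons_val] at h
      · exact .inl (.inl (.inl (.inr h)))
      · exact .inl (.inl (.inr h))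
      · exact .inl (.inr h)
      · exact .inr h

lemma exists_boxAdj_of_mem_gadgetEdges {c : Fin 4} {n y : ℕ} (hn : BoxInterior k n)
    (h : s(chainEmb k c n, y) ∈ gadgetEdges k) : ∃ m, BoxAdj k n m ∧ chainEmb k c m = y := by
  rcases mem_gadgetEdges.1 h with hcyc | ⟨c', n', m, hnm, h1, rfl⟩
  · have := hcyc.1
    rw [chainEmb_interior hn] at this
    omega
  · obtain ⟨rfl, rfl⟩ := chainEmb_eq_chainEmb hn hnm.lt.1 h1
    exact ⟨m, hnm, rfl⟩

lemma cycleAdj_or_of_mem_gadgetEdges {x y : ℕ} (hx : x < 12) (h : s(x, y) ∈ gadgetEdges k) :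
    CycleAdj x y ∨ ∃ c e m, (e = 0 ∨ e = 2 * k - 1) ∧ m < 4 * k ∧
      chainEmb k c e = x ∧ chainEmb k c m = y := by
  rcases mem_gadgetEdges.1 h with h | ⟨c, n, m, hnm, rfl, rfl⟩
  · exact .inl h
  · exact .inr ⟨c, n, m, endpoint_of_chainEmb_lt hx, hnm.lt.2, rfl, rfl⟩

/-- The chains are attached at even cycle vertices only. -/
lemma cycleAdj_of_mem_gadgetEdges_of_odd {x y : ℕ} (hx : x < 12) (hodd : x % 2 = 1)
    (h : s(x, y) ∈ gadgetEdges k) : CycleAdj x y := by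
  rcases cycleAdj_or_of_mem_gadgetEdges hx h with h | ⟨c, e, m, he, -, rfl, -⟩
  · exact h
  · have := chainEmb_endpoint_lt (c := c) he; omega

lemma eq_chainEmb_of_mem_gadgetEdges_chainPrivate (hk : 1 ≤ k) {c : Fin 4} {y : ℕ}
    (h : s(chainPrivate c, y) ∈ gadgetEdges k) :
    y = chainEmb k c 0 ∨ y = chainEmb k c (2 * k - 1) := by
  have := cycleAdj_of_mem_gadgetEdges_of_odd (chainPrivate_lt c) (by fin_cases c <;> decide) h
  rw [chainEmb_zero, chainEmb_last hk]
  unfold CycleAdj at this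
  fin_cases c <;> simp only [chainPrivate, chainStart, chainEnd] at this ⊢ <;> simp at this ⊢ <;>
    omega

lemma mem_gadgetVerts {x : ℕ} :
    x ∈ gadgetVerts k ↔ x < 12 ∨ ∃ c n, BoxInterior k n ∧ chainEmb k c n = x := by
  simp only [gadgetVerts, Set.mem_union, Set.mem_ofPred_eq]
  refine or_congr_right ⟨?_, ?_⟩
  · rintro ⟨j, hj, n, h0, h1, h2, rfl⟩
    exact ⟨⟨j, hj⟩, n, ⟨h0, h1, h2⟩, chainEmb_interior ⟨h0, h1, h2⟩⟩
  · rintro ⟨c, n, hn, rfl⟩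
    exact ⟨c, c.2, n, hn.1, hn.2.1, hn.2.2, chainEmb_interior hn⟩

lemma mem_gadgetVerts_of_mem_gadgetEdges {a b : ℕ} (h : s(a, b) ∈ gadgetEdges k) :
    a ∈ gadgetVerts k := by
  rcases mem_gadgetEdges.1 h with h | ⟨c, n, m, hnm, rfl, -⟩
  · exact mem_gadgetVerts.2 (.inl h.1)
  by_cases hn : n = 0 ∨ n = 2 * k - 1
  · exact mem_gadgetVerts.2 (.inl (chainEmb_endpoint_lt hn).1)
  · push Not at hn
    exact mem_gadgetVerts.2 (.inr ⟨c, n, ⟨by omega, hnm.lt.1, hn.2⟩, rfl⟩)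

def cycleMate : Option Bool → ℕ → ℕ
  | some true, x => if x % 2 = 0 then x + 1 else x - 1
  | some false, x => if x % 2 = 0 then (x + 11) % 12 else (x + 1) % 12
  | none, x =>
    if x = 0 then 6 else if x = 6 then 0 else if x % 3 = 1 then x + 1 else if x % 3 = 2 then x - 1
    else x

lemma cycleMate_lt (o : Option Bool) {x : ℕ} (hx : x < 12) : cycleMate o x < 12 := by
  revert o x; decide

lemma cycleMate_cycleMate (o : Option Bool) {x : ℕ} (hx : x < 12) :
    cycleMate o (cycleMate o x) = x := by
  revert o x; decide

lemma cycleMate_eq_self_iff (o : Option Bool) {x : ℕ} (hx : x < 12) :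
    cycleMate o x = x ↔ o = none ∧ (x = 3 ∨ x = 9) := by
  revert o x; decide

lemma cycleAdj_cycleMate (o : Option Bool) {x : ℕ} (hx : x < 12) (hne : cycleMate o x ≠ x) :
    CycleAdj x (cycleMate o x) := by
  revert o x; decide

/-- The perfect matchings `some true`, `some false` of the 12-cycle, and for `none` the matching
through the chord `ab` that leaves exactly `u` and `v` uncovered. -/
def cycleMatching (o : Option Bool) : SimpleGraph ℕ where
  Adj x y := x < 12 ∧ y = cycleMate o x ∧ x ≠ y
  symm := ⟨by
    rintro x _ ⟨hx, rfl, hne⟩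
    exact ⟨cycleMate_lt o hx, (cycleMate_cycleMate o hx).symm, hne.symm⟩⟩
  loopless := ⟨fun _ h => h.2.2 rfl⟩

lemma cycleMatching_isMatching (o : Option Bool) : (cycleMatching o).IsMatching := by
  rintro x _ _ ⟨-, rfl, -⟩ ⟨-, rfl, -⟩; rfl

lemma cycleMatching_le_iff {o : Option Bool} {B : SimpleGraph ℕ} :
    cycleMatching o ≤ B ↔ ∀ x < 12, cycleMate o x ≠ x → B.Adj x (cycleMate o x) := by
  refine ⟨fun h x hx hne => h ⟨hx, rfl, hne.symm⟩, ?_⟩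
  rintro h x _ ⟨hx, rfl, hne⟩
  exact h x hx (Ne.symm hne)

/-- Propagation around the 12-cycle, starting from the partner of `w₁`. -/
lemma exists_cycleMatching_le {B : SimpleGraph ℕ} (hB : B.IsMatching)
    (h : ∀ x < 12, x ≠ 3 → x ≠ 9 → ∃ y, CycleAdj x y ∧ B.Adj x y) :
    ∃ o, cycleMatching o ≤ B := by
  -- `x` is matched to `b` once its other cycle neighbours `a`, `a'` are matched to `w`, `w'`
  have forced : ∀ {x a a' b w w' : ℕ}, (x < 12 ∧ x ≠ 3 ∧ x ≠ 9 ∧ w ≠ x ∧ w' ≠ x ∧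
      ∀ y < 12, CycleAdj x y → y = a ∨ y = a' ∨ y = b) →
      B.Adj w a → B.Adj w' a' → B.Adj x b := by
    rintro x a a' b w w' ⟨hx, h3, h9, hw, hw', hnbr⟩ ha ha'
    obtain ⟨y, hxy, hy⟩ := h x hx h3 h9
    obtain rfl | rfl | rfl := hnbr y hxy.2.1 hxy
    · exact absurd (hB ha.symm hy.symm) hw
    · exact absurd (hB ha'.symm hy.symm) hw'
    · exact hy
  suffices ∃ o, ∀ x < 12, cycleMate o x ≠ x → B.Adj x (cycleMate o x) by
    simpa only [cycleMatching_le_iff] using this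
  obtain ⟨y2, h2, a2⟩ := h 2 (by omega) (by omega) (by omega)
  obtain rfl | rfl : y2 = 1 ∨ y2 = 3 := by unfold CycleAdj at h2; omega
  · obtain ⟨y0, h0, a0⟩ := h 0 (by omega) (by omega) (by omega)
    obtain rfl | rfl | rfl : y0 = 1 ∨ y0 = 11 ∨ y0 = 6 := by unfold CycleAdj at h0; omega
    · exact absurd (hB a0.symm a2.symm) (by omega)
    · have a10 : B.Adj 10 9 := forced (by decide) a0 a0
      have a8 : B.Adj 8 7 := forced (by decide) a10 a10
      have a6 : B.Adj 6 5 := forced (by decide) a8 a0.symm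
      have a4 : B.Adj 4 3 := forced (by decide) a6 a6
      refine ⟨some false, fun x hx hne => ?_⟩
      interval_cases x <;> simp [cycleMate] at hne ⊢ <;>
        first | assumption | exact B.adj_symm ‹_›
    · have a11 : B.Adj 11 10 := forced (by decide) a0.symm a0.symm
      have a5 : B.Adj 5 4 := forced (by decide) a0 a0
      have a7 : B.Adj 7 8 := forced (by decide) a0 a0
      refine ⟨none, fun x hx hne => ?_⟩
      interval_cases x <;> simp [cycleMate] at hne ⊢ <;>
        first | assumption | exact B.adj_symm ‹_›
  · have a1 : B.Adj 1 0 := forced (by decide) a2.symm a2.symm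
    have a11 : B.Adj 11 10 := forced (by decide) a1 a1
    obtain ⟨y8, h8, a8⟩ := h 8 (by omega) (by omega) (by omega)
    obtain rfl | rfl : y8 = 7 ∨ y8 = 9 := by unfold CycleAdj at h8; omega
    · have a6 : B.Adj 6 5 := forced (by decide) a8 a1
      have a4 : B.Adj 4 3 := forced (by decide) a6 a6
      exact absurd (hB a4.symm a2.symm) (by omega)
    · have a7 : B.Adj 7 6 := forced (by decide) a8.symm a8.symm
      have a5 : B.Adj 5 4 := forced (by decide) a7 a7
      refine ⟨some true, fun x hx hne => ?_⟩
      interval_cases x <;> simp [cycleMate] at hne ⊢ <;>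
        first | assumption | exact B.adj_symm ‹_›

def gadgetMatching (k : ℕ) (o : Option Bool) : SimpleGraph ℕ :=
  cycleMatching o ⊔ ⨆ c, (boxMatching k).map (chainEmb k c)

lemma gadgetMatching_adj_iff_of_lt {o : Option Bool} {x y : ℕ} (hx : x < 12) :
    (gadgetMatching k o).Adj x y ↔ (cycleMatching o).Adj x y := by
  refine ⟨fun h => h.resolve_right fun h => ?_, .inl⟩
  obtain ⟨c, hc⟩ := iSup_adj.1 h
  obtain ⟨n, m, hnm, rfl, -⟩ := (map_adj _ _ _ _).1 hc
  have := twelve_le_chainEmb (c := c) hnm.1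
  omega

lemma gadgetMatching_isMatching (o : Option Bool) : (gadgetMatching k o).IsMatching := by
  refine (cycleMatching_isMatching o).sup
    (IsMatching.iSup (fun c => boxMatching_isMatching.map _) fun c c' hcc' => ?_) ?_
  · simp only [support_map, Set.disjoint_left]
    rintro _ ⟨n, ⟨m, hnm⟩, rfl⟩ ⟨n', ⟨m', hnm'⟩, h⟩
    exact hcc' (chainEmb_eq_chainEmb hnm.1 (BoxAdj.lt (boxAdj_boxMate hnm'.1)).1 h).1.symm
  · rw [Set.disjoint_left]
    rintro x ⟨y, hx, -⟩ hx'
    obtain ⟨y', hy'⟩ := hx'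
    obtain ⟨c, hc⟩ := iSup_adj.1 hy'
    obtain ⟨n, m, hnm, rfl, -⟩ := (map_adj _ _ _ _).1 hc
    have := twelve_le_chainEmb (c := c) hnm.1
    omega

lemma gadgetMatching_le (o : Option Bool) : gadgetMatching k o ≤ fromEdgeSet (gadgetEdges k) := by
  refine sup_le (fun x y h => ?_) (iSup_le fun c => (map_le_iff_le_comap _ _ _).2 fun n m h => ?_)
  · obtain ⟨hx, rfl, hne⟩ := h
    exact ⟨mem_gadgetEdges.2 (.inl (cycleAdj_cycleMate o hx hne.symm)), hne⟩
  · obtain ⟨hn, rfl⟩ := h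
    exact ⟨mem_gadgetEdges.2 (.inr ⟨c, n, _, boxAdj_boxMate hn, rfl, rfl⟩),
      (chainEmb k c).injective.ne (boxMate_ne hn).symm⟩

lemma support_gadgetMatching_subset (o : Option Bool) :
    (gadgetMatching k o).support ⊆ gadgetVerts k := fun _ ⟨_, h⟩ =>
  mem_gadgetVerts_of_mem_gadgetEdges ((le_fromEdgeSet_iff _ _).1 (gadgetMatching_le o) h)

lemma mem_support_gadgetMatching {o : Option Bool} {x : ℕ} (hx : x ∈ gadgetVerts k)
    (h3 : x ≠ 3) (h9 : x ≠ 9) : x ∈ (gadgetMatching k o).support := by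
  rcases mem_gadgetVerts.1 hx with hx | ⟨c, n, hn, rfl⟩
  · refine ⟨cycleMate o x, .inl ⟨hx, rfl, fun h => ?_⟩⟩
    have := (cycleMate_eq_self_iff o hx).1 h.symm
    omega
  · exact ⟨chainEmb k c (boxMate k n),
      .inr (iSup_adj.2 ⟨c, (map_adj _ _ _ _).2 ⟨n, _, ⟨hn, rfl⟩, rfl, rfl⟩⟩)⟩

lemma mem_support_gadgetMatching_iff {o : Option Bool} {x : ℕ} (hx : x = 3 ∨ x = 9) :
    x ∈ (gadgetMatching k o).support ↔ o.isSome := by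
  have hx12 : x < 12 := by omega
  simp only [mem_support, gadgetMatching_adj_iff_of_lt hx12]
  constructor
  · rintro ⟨y, -, rfl, hne⟩
    cases o
    · exact absurd ((cycleMate_eq_self_iff none hx12).2 ⟨rfl, hx⟩) (Ne.symm hne)
    · rfl
  · intro ho
    refine ⟨_, hx12, rfl, fun h => ?_⟩
    have := ((cycleMate_eq_self_iff o hx12).1 h.symm).1
    simp [this] at ho

lemma gadgetMatching_adj_cycleMate {b : Bool} {x : ℕ} (hx : x < 12) :
    (gadgetMatching k (some b)).Adj x (cycleMate (some b) x) := by
  refine (gadgetMatching_adj_iff_of_lt hx).2 ⟨hx, rfl, fun h => ?_⟩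
  simpa using (cycleMate_eq_self_iff (some b) hx).1 h.symm

variable {B : SimpleGraph ℕ}

/-- The private vertex of a chain is matched to one of its ends, which is then matched outside the
chain. -/
lemma end_not_mem_support_comap_chainEmb (hk : 1 ≤ k) (hB : B.IsMatching)
    (hle : B ≤ fromEdgeSet (gadgetEdges k))
    (hcov : ∀ x ∈ gadgetVerts k, x ≠ 3 → x ≠ 9 → x ∈ B.support) (c : Fin 4) :
    0 ∉ (B.comap (chainEmb k c)).support ∨ 2 * k - 1 ∉ (B.comap (chainEmb k c)).support := by
  obtain ⟨y, hy⟩ := hcov _ (mem_gadgetVerts.2 (.inl (chainPrivate_lt c)))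
    (by fin_cases c <;> decide) (by fin_cases c <;> decide)
  have unmatched : ∀ e, B.Adj (chainEmb k c e) (chainPrivate c) →
      e ∉ (B.comap (chainEmb k c)).support := by
    rintro e he ⟨m, hm⟩
    exact chainEmb_ne_chainPrivate c c m (hB hm he)
  rcases eq_chainEmb_of_mem_gadgetEdges_chainPrivate hk ((le_fromEdgeSet_iff _ _).1 hle hy) with
    rfl | rfl
  exacts [.inl (unmatched 0 hy.symm), .inr (unmatched _ hy.symm)]

lemma boxMatching_le_comap_chainEmb (hk : 1 ≤ k) (hB : B.IsMatching)
    (hle : B ≤ fromEdgeSet (gadgetEdges k))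
    (hcov : ∀ x ∈ gadgetVerts k, x ≠ 3 → x ≠ 9 → x ∈ B.support) (c : Fin 4) :
    boxMatching k ≤ B.comap (chainEmb k c) := by
  refine boxMatching_le (hB.comap (chainEmb k c).injective) (fun n m hn h => ?_) (fun n hn => ?_)
    (end_not_mem_support_comap_chainEmb hk hB hle hcov c)
  · obtain ⟨m', hnm', hm'⟩ :=
      exists_boxAdj_of_mem_gadgetEdges hn ((le_fromEdgeSet_iff _ _).1 hle h)
    rwa [← (chainEmb k c).injective hm']
  · have := twelve_le_chainEmb (c := c) hn
    obtain ⟨y, hy⟩ := hcov _ (mem_gadgetVerts.2 (.inr ⟨c, n, hn, rfl⟩)) (by omega) (by omega)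
    obtain ⟨m, -, rfl⟩ :=
      exists_boxAdj_of_mem_gadgetEdges hn ((le_fromEdgeSet_iff _ _).1 hle hy)
    exact ⟨m, hy⟩

lemma exists_cycleAdj_adj (hk : 1 ≤ k) (hB : B.IsMatching)
    (hle : B ≤ fromEdgeSet (gadgetEdges k))
    (hcov : ∀ x ∈ gadgetVerts k, x ≠ 3 → x ≠ 9 → x ∈ B.support) :
    ∀ x < 12, x ≠ 3 → x ≠ 9 → ∃ y, CycleAdj x y ∧ B.Adj x y := by
  intro x hx h3 h9
  obtain ⟨y, hy⟩ := hcov x (mem_gadgetVerts.2 (.inl hx)) h3 h9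
  rcases cycleAdj_or_of_mem_gadgetEdges hx ((le_fromEdgeSet_iff _ _).1 hle hy) with
    h | ⟨c, e, m, he, hm, rfl, rfl⟩
  · exact ⟨y, h, hy⟩
  · exact (not_adj_of_boxMatching_le (hB.comap (chainEmb k c).injective)
      (boxMatching_le_comap_chainEmb hk hB hle hcov c)
      (end_not_mem_support_comap_chainEmb hk hB hle hcov c)
      he hm hy).elim

theorem exists_eq_gadgetMatching (hk : 1 ≤ k) (hB : B.IsMatching)
    (hle : B ≤ fromEdgeSet (gadgetEdges k))
    (hcov : ∀ x ∈ gadgetVerts k, x ≠ 3 → x ≠ 9 → x ∈ B.support) :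
    ∃ o, B = gadgetMatching k o := by
  obtain ⟨o, ho⟩ := exists_cycleMatching_le hB (exists_cycleAdj_adj hk hB hle hcov)
  have hGM : gadgetMatching k o ≤ B := sup_le ho <| iSup_le fun c =>
    (map_le_iff_le_comap _ _ _).2 (boxMatching_le_comap_chainEmb hk hB hle hcov c)
  refine ⟨o, hB.eq_of_le hGM fun x y hxy => ?_⟩
  have hedge : s(x, y) ∈ gadgetEdges k := (le_fromEdgeSet_iff _ _).1 hle hxy
  have hx := mem_gadgetVerts_of_mem_gadgetEdges hedge
  have hy := mem_gadgetVerts_of_mem_gadgetEdges (Sym2.eq_swap ▸ hedge)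
  by_cases h39 : x = 3 ∨ x = 9
  · have := cycleAdj_of_mem_gadgetEdges_of_odd (by omega) (by omega) hedge
    unfold CycleAdj at this
    exact .inr (mem_support_gadgetMatching hy (by omega) (by omega))
  · push Not at h39
    exact .inl (mem_support_gadgetMatching hx h39.1 h39.2)

end Gadget

/-! ### The graph `G_k` -/

section Counter

variable {k : ℕ}

lemma relabelGadget_injective {u v base : ℕ} (huv : u ≠ v) (hu : u < base) (hv : v < base) :
    Function.Injective (relabelGadget u v base) := by
  intro a b h; unfold relabelGadget at h; split_ifs at h <;> omega

def gadgetEmb (k : ℕ) (j : Fin 4) : ℕ ↪ ℕ :=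
  ⟨relabelGadget (3 * j + 1) (3 * j + 2) (12 + (16 * k + 12) * j),
    relabelGadget_injective (by omega) (lt_of_lt_of_le (b := 12) (by omega) (Nat.le_add_right _ _))
      (lt_of_lt_of_le (b := 12) (by omega) (Nat.le_add_right _ _))⟩

lemma gadgetEmb_three (j : Fin 4) : gadgetEmb k j 3 = 3 * j + 1 := rfl

lemma gadgetEmb_nine (j : Fin 4) : gadgetEmb k j 9 = 3 * j + 2 := rfl

lemma gadgetEmb_of_ne {j : Fin 4} {x : ℕ} (h3 : x ≠ 3) (h9 : x ≠ 9) :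
    gadgetEmb k j x = 12 + (16 * k + 12) * j + x := by
  simp [gadgetEmb, relabelGadget, h3, h9]

lemma gadgetEmb_lt_twelve_iff {j : Fin 4} {x : ℕ} : gadgetEmb k j x < 12 ↔ x = 3 ∨ x = 9 := by
  by_cases h : x = 3 ∨ x = 9
  · refine iff_of_true ?_ h
    rcases h with rfl | rfl <;> simp only [gadgetEmb_three, gadgetEmb_nine] <;> omega
  · refine iff_of_false ?_ h
    push Not at h
    rw [gadgetEmb_of_ne h.1 h.2]; omega

lemma lt_of_mem_gadgetVerts {x : ℕ} (hx : x ∈ gadgetVerts k) : x < 16 * k + 12 := by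
  rcases mem_gadgetVerts.1 hx with hx | ⟨c, n, hn, rfl⟩
  · omega
  · have : 4 * k * c ≤ 4 * k * 3 := Nat.mul_le_mul_left _ (by omega)
    rw [chainEmb_interior hn]; unfold BoxInterior at hn; omega

lemma gadgetEmb_eq_gadgetEmb {j j' : Fin 4} {x x' : ℕ} (hx : x < 16 * k + 12)
    (hx' : x' < 16 * k + 12) (h : gadgetEmb k j x = gadgetEmb k j' x') : j = j' ∧ x = x' := by
  by_cases h39 : x = 3 ∨ x = 9 <;> by_cases h39' : x' = 3 ∨ x' = 9
  · rcases h39 with rfl | rfl <;> rcases h39' with rfl | rfl <;>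
      simp only [gadgetEmb_three, gadgetEmb_nine] at h <;> omega
  · have := (gadgetEmb_lt_twelve_iff (k := k) (j := j)).2 h39
    have := gadgetEmb_lt_twelve_iff (k := k) (j := j') (x := x')
    omega
  · have := (gadgetEmb_lt_twelve_iff (k := k) (j := j')).2 h39'
    have := gadgetEmb_lt_twelve_iff (k := k) (j := j) (x := x)
    omega
  · push Not at h39 h39'
    rw [gadgetEmb_of_ne h39.1 h39.2, gadgetEmb_of_ne h39'.1 h39'.2] at h
    obtain ⟨hj, rfl⟩ := Nat.eq_of_mul_add_eq_mul_add (a := j) (a' := j') hx hx' (by linarith)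
    exact ⟨Fin.ext hj, rfl⟩

def OuterAdj (a b : ℕ) : Prop :=
  a < 12 ∧ b < 12 ∧ (a % 3 ≠ 1 ∧ b = (a + 1) % 12 ∨ b % 3 ≠ 1 ∧ a = (b + 1) % 12)

lemma mem_counterEdges {a b : ℕ} : s(a, b) ∈ counterEdges k ↔
    OuterAdj a b ∨
      ∃ j x y, s(x, y) ∈ gadgetEdges k ∧ gadgetEmb k j x = a ∧ gadgetEmb k j y = b := by
  simp only [counterEdges, Set.mem_union, Set.mem_ofPred_eq, Sym2.mk_mem_image_map_iff, Sym2.eq_iff]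
  refine or_congr ⟨fun ⟨i, hi, hm, h⟩ => by unfold OuterAdj; omega, fun h => ?_⟩
    ⟨fun ⟨j, hj, h⟩ => ⟨⟨j, hj⟩, h⟩, fun ⟨j, h⟩ => ⟨j, j.2, h⟩⟩
  unfold OuterAdj at h
  obtain ⟨ha, hb, h | h⟩ := h
  exacts [⟨a, ha, h.1, .inl ⟨rfl, h.2⟩⟩, ⟨b, hb, h.1, .inr ⟨h.2, rfl⟩⟩]

lemma mem_counterVerts {m : ℕ} : m ∈ counterVerts k ↔
    m < 12 ∨ ∃ j x, x ∈ gadgetVerts k ∧ x ≠ 3 ∧ x ≠ 9 ∧ gadgetEmb k j x = m := by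
  simp only [counterVerts, Set.mem_union, Set.mem_ofPred_eq]
  refine or_congr_right ⟨?_, ?_⟩
  · rintro ⟨j, hj, x, hx, h3, h9, rfl⟩
    exact ⟨⟨j, hj⟩, x, hx, h3, h9, gadgetEmb_of_ne h3 h9⟩
  · rintro ⟨j, x, hx, h3, h9, rfl⟩
    exact ⟨j, j.2, x, hx, h3, h9, gadgetEmb_of_ne h3 h9⟩

lemma gadgetEmb_mem_counterVerts {j : Fin 4} {x : ℕ} (hx : x ∈ gadgetVerts k) :
    gadgetEmb k j x ∈ counterVerts k := by
  by_cases h39 : x = 3 ∨ x = 9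
  · exact mem_counterVerts.2 (.inl (gadgetEmb_lt_twelve_iff.2 h39))
  · push Not at h39
    exact mem_counterVerts.2 (.inr ⟨j, x, hx, h39.1, h39.2, rfl⟩)

lemma outerAdj_or_of_mem_counterEdges {j : Fin 4} {x n : ℕ} (hx : x ∈ gadgetVerts k)
    (h : s(gadgetEmb k j x, n) ∈ counterEdges k) :
    OuterAdj (gadgetEmb k j x) n ∨ ∃ y, s(x, y) ∈ gadgetEdges k ∧ gadgetEmb k j y = n := by
  refine (mem_counterEdges.1 h).imp_right fun ⟨j', x', y, hxy, hx', hy⟩ => ?_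
  obtain ⟨rfl, rfl⟩ := gadgetEmb_eq_gadgetEmb
    (lt_of_mem_gadgetVerts (mem_gadgetVerts_of_mem_gadgetEdges hxy)) (lt_of_mem_gadgetVerts hx) hx'
  exact ⟨y, hxy, hy⟩

lemma eq_of_mem_counterEdges_succ {j : Fin 4} {n : ℕ}
    (h : s(3 * (j + 1).val, n) ∈ counterEdges k) :
    n = 3 * j + 2 ∨ n = 3 * (j + 1).val + 1 := by
  rcases mem_counterEdges.1 h with h | ⟨j', x, y, -, hx, -⟩
  · unfold OuterAdj at h; omega
  · have : gadgetEmb k j' x < 12 := by omega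
    rcases gadgetEmb_lt_twelve_iff.1 this with rfl | rfl
    · rw [gadgetEmb_three] at hx; omega
    · rw [gadgetEmb_nine] at hx; omega

/-- `o j = none` means that `u_j` and `v_j` are matched outside the `j`-th gadget. -/
def IsAlternatingPattern (o : Fin 4 → Option Bool) : Prop :=
  ∀ j : Fin 4, Xor (o j = none) (o (j + 1) = none)

instance : DecidablePred IsAlternatingPattern := fun _ => Fintype.decidableForallFintype

lemma card_isAlternatingPattern : Nat.card {o // IsAlternatingPattern o} = 8 := by
  rw [Nat.card_eq_fintype_card]; decide

def outerMatching (o : Fin 4 → Option Bool) : SimpleGraph ℕ :=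
  fromEdgeSet {e | ∃ j, o j = none ∧
    (e = s(3 * j.val, 3 * j.val + 1) ∨ e = s(3 * j.val + 2, 3 * (j + 1).val))}

lemma outerMatching_adj {o : Fin 4 → Option Bool} {m n : ℕ} :
    (outerMatching o).Adj m n ↔ ∃ j, o j = none ∧
      (m = 3 * j.val ∧ n = 3 * j.val + 1 ∨ m = 3 * j.val + 1 ∧ n = 3 * j.val ∨
        m = 3 * j.val + 2 ∧ n = 3 * (j + 1).val ∨
        m = 3 * (j + 1).val ∧ n = 3 * j.val + 2) := by
  simp only [outerMatching, fromEdgeSet_adj, Set.mem_ofPred_eq, Sym2.eq_iff]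
  constructor
  · rintro ⟨⟨j, hj, h⟩, -⟩; exact ⟨j, hj, by omega⟩
  · rintro ⟨j, hj, h⟩; exact ⟨⟨j, hj, by omega⟩, by omega⟩

def counterMatching (k : ℕ) (o : Fin 4 → Option Bool) : SimpleGraph ℕ :=
  outerMatching o ⊔ ⨆ j, (gadgetMatching k (o j)).map (gadgetEmb k j)

lemma counterMatching_adj_gadgetEmb {o : Fin 4 → Option Bool} {j : Fin 4} {x y : ℕ}
    (h : (gadgetMatching k (o j)).Adj x y) :
    (counterMatching k o).Adj (gadgetEmb k j x) (gadgetEmb k j y) :=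
  .inr (iSup_adj.2 ⟨j, (map_adj _ _ _ _).2 ⟨x, y, h, rfl, rfl⟩⟩)

lemma counterVerts_subset_support {o : Fin 4 → Option Bool} (ho : IsAlternatingPattern o) :
    counterVerts k ⊆ (counterMatching k o).support := by
  intro m hm
  rcases mem_counterVerts.1 hm with hm | ⟨j, x, hx, h3, h9, rfl⟩
  swap
  · obtain ⟨y, hy⟩ := mem_support_gadgetMatching (o := o j) hx h3 h9
    exact ⟨_, counterMatching_adj_gadgetEmb hy⟩
  set j : Fin 4 := ⟨m / 3, by omega⟩
  have closed : ∀ x, (x = 3 ∨ x = 9) → o j ≠ none →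
      gadgetEmb k j x ∈ (counterMatching k o).support := fun x hx hj => by
    obtain ⟨y, hy⟩ :=
      (mem_support_gadgetMatching_iff (k := k) hx).2 (Option.ne_none_iff_isSome.1 hj)
    exact ⟨_, counterMatching_adj_gadgetEmb hy⟩
  obtain h0 | h1 | h2 : m = 3 * j.val ∨ m = 3 * j.val + 1 ∨ m = 3 * j.val + 2 := by
    simp only [j]; omega
  · by_cases hj : o j = none
    · exact ⟨_, .inl (outerMatching_adj.2 ⟨j, hj, .inl ⟨h0, rfl⟩⟩)⟩
    · have hprev : o (j - 1) = none := by simpa [hj, Xor] using ho (j - 1)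
      exact ⟨_, .inl (outerMatching_adj.2
        ⟨j - 1, hprev, .inr (.inr (.inr ⟨by simpa using h0, rfl⟩))⟩)⟩
  · by_cases hj : o j = none
    · exact ⟨_, .inl (outerMatching_adj.2 ⟨j, hj, .inr (.inl ⟨h1, rfl⟩)⟩)⟩
    · exact h1 ▸ closed 3 (.inl rfl) hj
  · by_cases hj : o j = none
    · exact ⟨_, .inl (outerMatching_adj.2 ⟨j, hj, .inr (.inr (.inl ⟨h2, rfl⟩))⟩)⟩
    · exact h2 ▸ closed 9 (.inr rfl) hj

variable {A : SimpleGraph ℕ}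

lemma exists_comap_gadgetEmb_inf_eq_gadgetMatching (hk : 1 ≤ k) (hA : A.IsMatching)
    (hle : A ≤ fromEdgeSet (counterEdges k)) (hsupp : A.support = counterVerts k) (j : Fin 4) :
    ∃ oj, A.comap (gadgetEmb k j) ⊓ fromEdgeSet (gadgetEdges k) = gadgetMatching k oj := by
  refine exists_eq_gadgetMatching hk ((hA.comap (gadgetEmb k j).injective).inf_left) inf_le_right
    fun x hx h3 h9 => ?_
  obtain ⟨n, hn⟩ : gadgetEmb k j x ∈ A.support := hsupp ▸ gadgetEmb_mem_counterVerts hx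
  rcases outerAdj_or_of_mem_counterEdges hx ((le_fromEdgeSet_iff _ _).1 hle hn) with
    hout | ⟨y, hxy, rfl⟩
  · have := (gadgetEmb_lt_twelve_iff (k := k) (j := j) (x := x)).1 hout.1
    omega
  · exact ⟨y, hn, (fromEdgeSet_adj _).2 ⟨hxy, fun h => hn.ne (congrArg _ h)⟩⟩

lemma adj_gadgetEmb_iff_eq_none (hA : A.IsMatching) (hle : A ≤ fromEdgeSet (counterEdges k))
    (hsupp : A.support = counterVerts k) {j : Fin 4} {oj : Option Bool}
    (hB : A.comap (gadgetEmb k j) ⊓ fromEdgeSet (gadgetEdges k) = gadgetMatching k oj) {x w : ℕ}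
    (hxw : x = 3 ∧ w = 3 * j.val ∨ x = 9 ∧ w = 3 * (j + 1).val) :
    A.Adj (gadgetEmb k j x) w ↔ oj = none := by
  have hx : x = 3 ∨ x = 9 := by omega
  constructor
  · intro h
    cases oj with
    | none => rfl
    | some b =>
      have hmate := gadgetMatching_adj_cycleMate (k := k) (b := b) (x := x) (by omega)
      rw [← hB] at hmate
      have hw := hA h hmate.1
      have : cycleMate (some b) x = 3 ∨ cycleMate (some b) x = 9 :=
        gadgetEmb_lt_twelve_iff.1 (hw ▸ (by omega : w < 12))
      rcases hx with rfl | rfl <;> cases b <;> simp [cycleMate] at this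
  · rintro rfl
    obtain ⟨n, hn⟩ : gadgetEmb k j x ∈ A.support :=
      hsupp ▸ mem_counterVerts.2 (.inl (gadgetEmb_lt_twelve_iff.2 hx))
    rcases outerAdj_or_of_mem_counterEdges (mem_gadgetVerts.2 (.inl (by omega)))
      ((le_fromEdgeSet_iff _ _).1 hle hn) with hout | ⟨y, hxy, rfl⟩
    · suffices n = w from this ▸ hn
      unfold OuterAdj at hout
      rcases hxw with ⟨rfl, rfl⟩ | ⟨rfl, rfl⟩
      · rw [gadgetEmb_three] at hout; omega
      · rw [gadgetEmb_nine] at hout; omega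
    · have : (gadgetMatching k none).Adj x y :=
        hB ▸ ⟨hn, (fromEdgeSet_adj _).2 ⟨hxy, fun h => hn.ne (congrArg _ h)⟩⟩
      simpa using (mem_support_gadgetMatching_iff hx).1 ⟨y, this⟩

lemma isAlternatingPattern_of_adj_iff (hA : A.IsMatching)
    (hle : A ≤ fromEdgeSet (counterEdges k)) (hsupp : A.support = counterVerts k)
    {o : Fin 4 → Option Bool}
    (houter : ∀ j x w, (x = 3 ∧ w = 3 * j.val ∨ x = 9 ∧ w = 3 * (j + 1).val) →
      (A.Adj (gadgetEmb k j x) w ↔ o j = none)) :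
    IsAlternatingPattern o := by
  intro j
  obtain ⟨n, hn⟩ : 3 * (j + 1).val ∈ A.support :=
    hsupp ▸ mem_counterVerts.2 (.inl (by omega))
  have hv := houter j 9 (3 * (j + 1).val) (.inr ⟨rfl, rfl⟩)
  have hu := houter (j + 1) 3 (3 * (j + 1).val) (.inl ⟨rfl, rfl⟩)
  rw [gadgetEmb_nine] at hv
  rw [gadgetEmb_three] at hu
  rcases eq_of_mem_counterEdges_succ ((le_fromEdgeSet_iff _ _).1 hle hn) with rfl | rfl
  · refine .inl ⟨hv.1 hn.symm, fun h => ?_⟩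
    have := hA hn (hu.2 h).symm
    omega
  · refine .inr ⟨hu.1 hn.symm, fun h => ?_⟩
    have := hA hn (hv.2 h).symm
    omega

lemma counterMatching_le_of_adj_iff {o : Fin 4 → Option Bool}
    (ho : ∀ j, A.comap (gadgetEmb k j) ⊓ fromEdgeSet (gadgetEdges k) = gadgetMatching k (o j))
    (houter : ∀ j x w, (x = 3 ∧ w = 3 * j.val ∨ x = 9 ∧ w = 3 * (j + 1).val) →
      (A.Adj (gadgetEmb k j x) w ↔ o j = none)) :
    counterMatching k o ≤ A := by
  refine sup_le (fun m n h => ?_) (iSup_le fun j =>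
    (map_le_iff_le_comap _ _ _).2 ((ho j).symm ▸ inf_le_left))
  obtain ⟨j, hj, h | h | h | h⟩ := outerMatching_adj.1 h <;> obtain ⟨rfl, rfl⟩ := h
  · exact ((houter j 3 _ (.inl ⟨rfl, rfl⟩)).2 hj).symm
  · exact (houter j 3 _ (.inl ⟨rfl, rfl⟩)).2 hj
  · exact (houter j 9 _ (.inr ⟨rfl, rfl⟩)).2 hj
  · exact ((houter j 9 _ (.inr ⟨rfl, rfl⟩)).2 hj).symm

theorem exists_eq_counterMatching (hk : 1 ≤ k) (hA : A.IsMatching)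
    (hle : A ≤ fromEdgeSet (counterEdges k)) (hsupp : A.support = counterVerts k) :
    ∃ o, IsAlternatingPattern o ∧ A = counterMatching k o := by
  choose o ho using exists_comap_gadgetEmb_inf_eq_gadgetMatching hk hA hle hsupp
  have houter : ∀ j x w, (x = 3 ∧ w = 3 * j.val ∨ x = 9 ∧ w = 3 * (j + 1).val) →
      (A.Adj (gadgetEmb k j x) w ↔ o j = none) :=
    fun j _ _ => adj_gadgetEmb_iff_eq_none hA hle hsupp (ho j)
  have halt := isAlternatingPattern_of_adj_iff hA hle hsupp houter
  exact ⟨o, halt, hA.eq_of_le (counterMatching_le_of_adj_iff ho houter) fun m n h =>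
    .inl (counterVerts_subset_support halt (hsupp ▸ h.mem_support_left))⟩

variable {o : Fin 4 → Option Bool}

lemma outerMatching_isMatching (ho : IsAlternatingPattern o) : (outerMatching o).IsMatching := by
  intro m n n' h h'
  obtain ⟨j, hj, h⟩ := outerMatching_adj.1 h
  obtain ⟨j', hj', h'⟩ := outerMatching_adj.1 h'
  by_contra hne
  have : j' = j + 1 ∨ j = j' + 1 := by omega
  rcases this with rfl | rfl
  · simpa [Xor, hj, hj'] using ho j
  · simpa [Xor, hj, hj'] using ho j'

lemma mem_support_outerMatching {m : ℕ} (h : m ∈ (outerMatching o).support) :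
    m < 12 ∧ (m % 3 = 0 ∨ ∃ j, o j = none ∧ (m = 3 * j.val + 1 ∨ m = 3 * j.val + 2)) := by
  obtain ⟨n, h⟩ := h
  obtain ⟨j, hj, h⟩ := outerMatching_adj.1 h
  refine ⟨by omega, ?_⟩
  rcases h with h | h | h | h
  · exact .inl (by omega)
  · exact .inr ⟨j, hj, .inl h.1⟩
  · exact .inr ⟨j, hj, .inr h.1⟩
  · exact .inl (by omega)

lemma mem_support_map_gadgetEmb {j : Fin 4} {oj : Option Bool} {m : ℕ}
    (h : m ∈ ((gadgetMatching k oj).map (gadgetEmb k j)).support) :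
    ∃ x ∈ (gadgetMatching k oj).support, gadgetEmb k j x = m := by
  rwa [support_map] at h

lemma counterMatching_isMatching (ho : IsAlternatingPattern o) :
    (counterMatching k o).IsMatching := by
  refine (outerMatching_isMatching ho).sup
    (IsMatching.iSup (fun j => (gadgetMatching_isMatching _).map _) fun j j' hjj' => ?_) ?_
  · refine Set.disjoint_left.2 fun m hm hm' => hjj' ?_
    obtain ⟨x, hx, rfl⟩ := mem_support_map_gadgetEmb hm
    obtain ⟨x', hx', h⟩ := mem_support_map_gadgetEmb hm'
    exact (gadgetEmb_eq_gadgetEmb (lt_of_mem_gadgetVerts (support_gadgetMatching_subset _ hx))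
      (lt_of_mem_gadgetVerts (support_gadgetMatching_subset _ hx')) h.symm).1
  · refine Set.disjoint_left.2 fun m hm ⟨n, hmn⟩ => ?_
    obtain ⟨j, hj⟩ := iSup_adj.1 hmn
    obtain ⟨x, hx, rfl⟩ := mem_support_map_gadgetEmb hj.mem_support_left
    obtain ⟨hlt, h0 | ⟨j', hj', h⟩⟩ := mem_support_outerMatching hm
    · have := gadgetEmb_lt_twelve_iff.1 hlt
      rcases this with rfl | rfl
      · rw [gadgetEmb_three] at h0; omega
      · rw [gadgetEmb_nine] at h0; omega
    · have h39 := gadgetEmb_lt_twelve_iff.1 hlt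
      have : j' = j := by
        rcases h39 with rfl | rfl
        · rw [gadgetEmb_three] at h; omega
        · rw [gadgetEmb_nine] at h; omega
      subst this
      simpa [hj'] using (mem_support_gadgetMatching_iff h39).1 hx

lemma counterMatching_le : counterMatching k o ≤ fromEdgeSet (counterEdges k) := by
  refine sup_le (fun m n h => ?_) (iSup_le fun j =>
    (map_le_iff_le_comap _ _ _).2 fun x y h => ?_)
  · refine (fromEdgeSet_adj _).2 ⟨mem_counterEdges.2 (.inl ?_), h.ne⟩
    obtain ⟨j, -, h⟩ := outerMatching_adj.1 h
    unfold OuterAdj; omega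
  · exact (fromEdgeSet_adj _).2 ⟨mem_counterEdges.2 (.inr ⟨j, x, y,
      (le_fromEdgeSet_iff _ _).1 (gadgetMatching_le _) h, rfl, rfl⟩),
      (gadgetEmb k j).injective.ne h.ne⟩

lemma support_counterMatching (ho : IsAlternatingPattern o) :
    (counterMatching k o).support = counterVerts k := by
  refine subset_antisymm (fun m ⟨n, h⟩ => ?_) (counterVerts_subset_support ho)
  rcases h with h | h
  · exact mem_counterVerts.2 (.inl (mem_support_outerMatching h.mem_support_left).1)
  · obtain ⟨j, hj⟩ := iSup_adj.1 h
    obtain ⟨x, hx, rfl⟩ := mem_support_map_gadgetEmb hj.mem_support_left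
    exact gadgetEmb_mem_counterVerts (support_gadgetMatching_subset _ hx)

lemma counterMatching_adj_iff_eq_none (ho : IsAlternatingPattern o) (j : Fin 4) :
    (counterMatching k o).Adj (3 * j.val + 1) (3 * j.val) ↔ o j = none := by
  refine ⟨fun h => ?_,
    fun hj => .inl (outerMatching_adj.2 ⟨j, hj, .inr (.inl ⟨rfl, rfl⟩)⟩)⟩
  cases hj : o j with
  | none => rfl
  | some b =>
    have hmate : (gadgetMatching k (o j)).Adj 3 (cycleMate (some b) 3) :=
      hj ▸ gadgetMatching_adj_cycleMate (k := k) (b := b) (x := 3) (by omega)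
    have := counterMatching_isMatching ho h (counterMatching_adj_gadgetEmb hmate)
    have : cycleMate (some b) 3 = 3 ∨ cycleMate (some b) 3 = 9 :=
      gadgetEmb_lt_twelve_iff.1 (this ▸ (by omega : 3 * j.val < 12))
    cases b <;> simp [cycleMate] at this

lemma counterMatching_adj_iff_eq_some_true (ho : IsAlternatingPattern o) (j : Fin 4) :
    (counterMatching k o).Adj (3 * j.val + 1) (gadgetEmb k j 2) ↔ o j = some true := by
  refine ⟨fun h => ?_, fun hj => ?_⟩
  · cases hj : o j with
    | none =>
      have := counterMatching_isMatching ho h ((counterMatching_adj_iff_eq_none ho j).2 hj)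
      rw [gadgetEmb_of_ne (by omega) (by omega)] at this; omega
    | some b =>
      have hmate : (gadgetMatching k (o j)).Adj 3 (cycleMate (some b) 3) :=
        hj ▸ gadgetMatching_adj_cycleMate (k := k) (b := b) (x := 3) (by omega)
      have := (gadgetEmb k j).injective
        (counterMatching_isMatching ho h (counterMatching_adj_gadgetEmb hmate))
      cases b <;> simp [cycleMate] at this ⊢
  · exact counterMatching_adj_gadgetEmb (x := 3) (y := 2)
      (hj ▸ gadgetMatching_adj_cycleMate (k := k) (b := true) (x := 3) (by omega))

lemma counterMatching_injOn :
    Set.InjOn (counterMatching k) {o | IsAlternatingPattern o} := by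
  intro o ho o' ho' h
  funext j
  have hnone := (counterMatching_adj_iff_eq_none (k := k) ho j).symm.trans
    (h ▸ counterMatching_adj_iff_eq_none ho' j)
  have htrue := (counterMatching_adj_iff_eq_some_true (k := k) ho j).symm.trans
    (h ▸ counterMatching_adj_iff_eq_some_true ho' j)
  rcases hj : o j with _ | _ | _ <;> rcases hj' : o' j with _ | _ | _ <;> simp_all

noncomputable def counterMatchingEquiv (hk : 1 ≤ k) : {o // IsAlternatingPattern o} ≃
    {N : SimpleGraph ℕ // N.IsMatching ∧ N ≤ fromEdgeSet (counterEdges k) ∧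
      N.support = counterVerts k} :=
  Equiv.ofBijective
    (fun o => ⟨counterMatching k o, counterMatching_isMatching o.2, counterMatching_le,
      support_counterMatching o.2⟩)
    ⟨fun o o' h => Subtype.ext (counterMatching_injOn o.2 o'.2 (congrArg Subtype.val h)),
      fun N => by
        obtain ⟨o, ho, h⟩ := exists_eq_counterMatching hk N.2.1 N.2.2.1 N.2.2.2
        exact ⟨⟨o, ho⟩, Subtype.ext h.symm⟩⟩

end Counter

/-- For every `k ≥ 1`, the counterexample graph `G_k` has exactly `8` perfect
matchings. -/
theorem counterGraph_pmCount (k : ℕ) (hk : 1 ≤ k) :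
    pmCount (counterGraph k) = 8 := by
  rw [pmCount, counterGraph, Nat.card_congr (perfectMatchingInduceEquiv _ _),
    ← Nat.card_congr (counterMatchingEquiv hk), card_isAlternatingPattern]
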